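/- arXiv:1602.01108 — 2 statements merged into one kernel-verified Lean document; each statement's English description precedes it below -/
import Mathlib

section
/- (Finite-volume metastability of symmetry-breaking states.) Let ρ be a density matrix and L, L_A linear maps on matrices, and let real parameters satisfy 0 < μ ≤ 1, o > 0, N > 0, K ≥ 0, 0 ≤ r ≤ o·N. Assume: (i) L(1) = 0; (ii) L satisfies detailed balance with respect to ρ; (iii) L(X†) = L(X)† for all X; (iv) the difference M := L − L_A satisfies M(Y·A) = M(Y)·A for all Y, and M(1) = 0; (v) ‖L_A(X)‖ ≤ K·‖X‖ for all X; (vi) S = Q + R with S, Q, R Hermitian, Q·R = R·Q, ‖Q‖ ≤ o·N, ‖R‖ ≤ r; (vii) L_A(Q·X) = Q·L_A(X) and L_A(X)·Q = Q·L_A(X) for all X; (viii) extensive fluctuations: tr(ρ·S²) ≥ (μ·o·N)². Define Õ^± := (1 ± S/√(tr(ρ·S²)))/√2. Then the symmetry-breaking states are metastable: |tr(ρ · Õ^± · L(A) · Õ^±)| ≤ 6·K·r·‖A‖ / (μ²·o·N). -/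
/-!
Write `B := L A`. Locality (iv) gives `L A = L_A A`, so `‖B‖ ≤ K ‖A‖` and `B` commutes with the
far part `Q`. Detailed balance together with `L 1 = 0` makes `ρ` stationary, `tr(ρ L X) = 0`, and
for every `P` commuting with `L_A` (here `P = Q` and `P = Q²`) it forces `tr(ρ P B) = 0`.
Expanding `tr(ρ (1 + vS) B (1 + vS))` with `S = Q + R`, every term without a factor `R` therefore
vanishes, and since `|tr(ρ X)| ≤ ‖X‖` each surviving term costs at most `‖v‖ ‖R‖ ‖B‖` or
`‖v‖² ‖Q‖ ‖R‖ ‖B‖`. Finally `‖v‖ = 1/√tr(ρS²) ≤ 1/(μoN)` and `‖Q‖ ≤ oN`.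
-/

open Matrix
open scoped ComplexOrder Matrix.Norms.L2Operator

/-- The symmetry-breaking perturbation operator `Õ⁺ = (1 + S/s)/√2`. -/
noncomputable def tildeOplus {n : Type*} [Fintype n] [DecidableEq n]
    (S : Matrix n n ℂ) (s : ℝ) : Matrix n n ℂ :=
  (Real.sqrt 2 : ℂ)⁻¹ • (1 + ((s : ℂ))⁻¹ • S)

/-- The symmetry-breaking perturbation operator `Õ⁻ = (1 - S/s)/√2`. -/
noncomputable def tildeOminus {n : Type*} [Fintype n] [DecidableEq n]
    (S : Matrix n n ℂ) (s : ℝ) : Matrix n n ℂ :=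
  (Real.sqrt 2 : ℂ)⁻¹ • (1 - ((s : ℂ))⁻¹ • S)

open scoped InnerProductSpace

section StateBound

variable {𝕜 n : Type*} [RCLike 𝕜] [Fintype n] [DecidableEq n]

theorem Matrix.trace_eq_sum_inner (M : Matrix n n 𝕜)
    (b : OrthonormalBasis n 𝕜 (EuclideanSpace 𝕜 n)) :
    M.trace = ∑ i, ⟪b i, toLpLin 2 2 M (b i)⟫_𝕜 := by
  rw [← LinearMap.trace_eq_sum_inner, toLpLin_eq_toLin, trace_toLin_eq]

/-- Computed in an eigenbasis of `ρ`: `tr(ρ X) = ∑ λᵢ ⟪eᵢ, X eᵢ⟫` with `λᵢ ≥ 0`. -/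
theorem Matrix.PosSemidef.norm_trace_mul_le {ρ : Matrix n n 𝕜} (hρ : ρ.PosSemidef)
    (X : Matrix n n 𝕜) : ‖(ρ * X).trace‖ ≤ ‖ρ.trace‖ * ‖X‖ := by
  set e := hρ.isHermitian.eigenvectorBasis
  have hterm (i : n) : ⟪e i, toLpLin 2 2 (X * ρ) (e i)⟫_𝕜
      = hρ.isHermitian.eigenvalues i * ⟪e i, toLpLin 2 2 X (e i)⟫_𝕜 := by
    rw [toLpLin_mul_same, LinearMap.comp_apply, toLpLin_apply _ _ ρ,
      hρ.isHermitian.mulVec_eigenvectorBasis, WithLp.toLp_smul, WithLp.toLp_ofLp,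
      LinearMap.map_smul_of_tower, ← algebraMap_smul 𝕜, inner_smul_right]
  have htrace : ‖ρ.trace‖ = ∑ i, hρ.isHermitian.eigenvalues i := by
    rw [hρ.isHermitian.trace_eq_sum_eigenvalues, ← RCLike.ofReal_sum, RCLike.norm_ofReal,
      abs_of_nonneg (Finset.sum_nonneg fun i _ => hρ.eigenvalues_nonneg i)]
  rw [trace_mul_comm, trace_eq_sum_inner _ e, htrace, Finset.sum_mul]
  refine (norm_sum_le _ _).trans (Finset.sum_le_sum fun i _ => ?_)
  rw [hterm, norm_mul, RCLike.norm_ofReal, abs_of_nonneg (hρ.eigenvalues_nonneg i)]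
  refine mul_le_mul_of_nonneg_left ?_ (hρ.eigenvalues_nonneg i)
  calc ‖⟪e i, toLpLin 2 2 X (e i)⟫_𝕜‖ ≤ ‖e i‖ * ‖toLpLin 2 2 X (e i)‖ := norm_inner_le_norm _ _
    _ ≤ ‖X‖ := by
      rw [e.orthonormal.1 i, one_mul]
      simpa [e.orthonormal.1 i, toLpLin_apply] using l2_opNorm_mulVec X (e i)

end StateBound

section Liouvillian

variable {𝕜 n : Type*} [CommRing 𝕜] [Fintype n] [DecidableEq n]

def IsDetailedBalance (ρ : Matrix n n 𝕜) (L : Module.End 𝕜 (Matrix n n 𝕜)) : Prop :=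
  ∀ X Y, (ρ * L X * Y).trace = (ρ * X * L Y).trace

variable {ρ A : Matrix n n 𝕜} {L La : Module.End 𝕜 (Matrix n n 𝕜)}

theorem IsDetailedBalance.trace_mul_apply_eq_zero (hdb : IsDetailedBalance ρ L) (hL1 : L 1 = 0)
    (X : Matrix n n 𝕜) : (ρ * L X).trace = 0 := by
  simpa [hL1] using hdb X 1

theorem apply_eq_of_sub_apply_mul (hM : ∀ Y, (L - La) (Y * A) = (L - La) Y * A)
    (hM1 : (L - La) 1 = 0) : L A = La A := by
  simpa [hM1, sub_eq_zero] using hM 1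

/-- Since `L_A P = 0`, locality gives `L P · A = L (P A) - P · L A`; detailed balance against `A`
and stationarity then turn `tr(ρ P L A)` into its own negative. -/
theorem IsDetailedBalance.trace_mul_mul_apply_eq_zero [NoZeroDivisors 𝕜] [CharZero 𝕜]
    (hdb : IsDetailedBalance ρ L) (hL1 : L 1 = 0)
    (hM : ∀ Y, (L - La) (Y * A) = (L - La) Y * A) (hM1 : (L - La) 1 = 0)
    {P : Matrix n n 𝕜} (hP : ∀ X, La (P * X) = P * La X) : (ρ * (P * L A)).trace = 0 := by
  have hLa1 : La 1 = 0 := by simpa [hL1] using hM1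
  have hLaP : La P = 0 := by simpa [hLa1] using hP 1
  have hLP : L P * A = L (P * A) - P * L A := by
    have h := hM P
    simp only [LinearMap.sub_apply, hLaP, sub_zero, hP A] at h
    rw [← h, apply_eq_of_sub_apply_mul hM hM1]
  have h := hdb P A
  rw [mul_assoc ρ (L P), hLP, mul_sub, trace_sub, hdb.trace_mul_apply_eq_zero hL1, zero_sub,
    mul_assoc, neg_eq_iff_add_eq_zero, add_self_eq_zero] at h
  exact h

end Liouvillian

section Expansion

variable {𝕜 n : Type*} [CommRing 𝕜] [Fintype n]

theorem trace_mul_smul_mul_smul (ρ X B : Matrix n n 𝕜) (c : 𝕜) :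
    (ρ * (c • X) * B * (c • X)).trace = c ^ 2 * (ρ * X * B * X).trace := by
  simp only [Matrix.mul_smul, Matrix.smul_mul, smul_smul, trace_smul, smul_eq_mul, sq]

variable [DecidableEq n]

theorem trace_mul_one_add_smul_add_mul_one_add_smul_add {ρ B Q : Matrix n n 𝕜}
    (hB : (ρ * B).trace = 0) (hQB : (ρ * (Q * B)).trace = 0)
    (hQQB : (ρ * (Q * Q * B)).trace = 0) (hBQ : B * Q = Q * B) (R : Matrix n n 𝕜) (v : 𝕜) :
    (ρ * (1 + v • (Q + R)) * B * (1 + v • (Q + R))).trace =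
      v * (ρ * (R * B + B * R)).trace
        + v ^ 2 * (ρ * (Q * B * R + R * Q * B + R * B * R)).trace := by
  have hQBQ : Q * B * Q = Q * Q * B := by rw [mul_assoc, hBQ, mul_assoc]
  have hRBQ : R * B * Q = R * Q * B := by rw [mul_assoc, hBQ, mul_assoc]
  have hexpand : (1 + v • (Q + R)) * B * (1 + v • (Q + R)) =
      B + (2 * v) • (Q * B) + v ^ 2 • (Q * Q * B) + v • (R * B + B * R)
        + v ^ 2 • (Q * B * R + R * Q * B + R * B * R) := by
    simp only [mul_add, add_mul, Matrix.smul_mul, Matrix.mul_smul, one_mul, mul_one, smul_add,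
      smul_smul, hBQ, hQBQ, hRBQ]
    module
  rw [mul_assoc, mul_assoc, ← mul_assoc (1 + v • (Q + R)), hexpand]
  simp only [mul_add, Matrix.mul_smul, trace_add, trace_smul, smul_eq_mul, hB, hQB, hQQB]
  ring

end Expansion

theorem norm_trace_mul_one_add_smul_add_mul_le {𝕜 n : Type*} [RCLike 𝕜] [Fintype n]
    [DecidableEq n] {ρ B Q R : Matrix n n 𝕜} (hρ : ρ.PosSemidef) (hρtr : ρ.trace = 1)
    (hB : (ρ * B).trace = 0) (hQB : (ρ * (Q * B)).trace = 0)
    (hQQB : (ρ * (Q * Q * B)).trace = 0) (hBQ : B * Q = Q * B) (v : 𝕜) :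
    ‖(ρ * (1 + v • (Q + R)) * B * (1 + v • (Q + R))).trace‖ ≤
      ‖v‖ * (2 * ‖R‖ * ‖B‖) + ‖v‖ ^ 2 * ((2 * ‖Q‖ + ‖R‖) * ‖R‖ * ‖B‖) := by
  have hstate (X : Matrix n n 𝕜) : ‖(ρ * X).trace‖ ≤ ‖X‖ := by
    simpa [hρtr] using hρ.norm_trace_mul_le X
  rw [trace_mul_one_add_smul_add_mul_one_add_smul_add hB hQB hQQB hBQ]
  refine (norm_add_le _ _).trans ?_
  rw [norm_mul, norm_mul, norm_pow]
  gcongr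
  · calc ‖(ρ * (R * B + B * R)).trace‖ ≤ ‖R * B + B * R‖ := hstate _
      _ ≤ ‖R‖ * ‖B‖ + ‖B‖ * ‖R‖ := norm_add_le_of_le (norm_mul_le _ _) (norm_mul_le _ _)
      _ = 2 * ‖R‖ * ‖B‖ := by ring
  · calc ‖(ρ * (Q * B * R + R * Q * B + R * B * R)).trace‖
        ≤ ‖Q * B * R + R * Q * B + R * B * R‖ := hstate _
      _ ≤ ‖Q‖ * ‖B‖ * ‖R‖ + ‖R‖ * ‖Q‖ * ‖B‖ + ‖R‖ * ‖B‖ * ‖R‖ :=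
        norm_add₃_le.trans (add_le_add_three norm_mul₃_le norm_mul₃_le norm_mul₃_le)
      _ = (2 * ‖Q‖ + ‖R‖) * ‖R‖ * ‖B‖ := by ring

theorem le_sqrt_re_of_sq_le {a : ℝ} {z : ℂ} (h : (a : ℂ) ^ 2 ≤ z) : a ≤ √z.re := by
  refine Real.le_sqrt_of_sq_le ?_
  rw [← Complex.ofReal_re (a ^ 2), Complex.ofReal_pow]
  exact (Complex.le_def.mp h).1

theorem norm_inv_sqrt_two_sq : ‖((√2 : ℝ) : ℂ)⁻¹ ^ 2‖ = 2⁻¹ := by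
  rw [← Complex.ofReal_inv, ← Complex.ofReal_pow, Complex.norm_real, inv_pow,
    Real.sq_sqrt zero_le_two, Real.norm_of_nonneg (by norm_num)]

theorem metastability_error_le {μ o N K r a t q y x : ℝ} (hμ0 : 0 < μ) (hμ1 : μ ≤ 1)
    (ho : 0 < o) (hN : 0 < N) (ht0 : 0 ≤ t) (ht : t ≤ (μ * o * N)⁻¹) (hq0 : 0 ≤ q)
    (hq : q ≤ o * N) (hy0 : 0 ≤ y) (hy : y ≤ r) (hr : r ≤ o * N) (hx0 : 0 ≤ x)
    (hx : x ≤ K * a) :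
    2⁻¹ * (t * (2 * y * x) + t ^ 2 * ((2 * q + y) * y * x)) ≤ 6 * K * r * a / (μ ^ 2 * o * N) := by
  have hr0 : 0 ≤ r := hy0.trans hy
  calc 2⁻¹ * (t * (2 * y * x) + t ^ 2 * ((2 * q + y) * y * x))
      ≤ 2⁻¹ * ((μ * o * N)⁻¹ * (2 * r * x)
          + ((μ * o * N)⁻¹) ^ 2 * ((2 * (o * N) + r) * r * x)) := by
        gcongr
    _ ≤ 6 * r * x / (μ ^ 2 * o * N) := by
        have hrx : 0 ≤ r * x := mul_nonneg hr0 hx0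
        have hoN : 0 ≤ o * N := (mul_pos ho hN).le
        rw [div_eq_mul_inv]
        field_simp
        nlinarith [mul_nonneg (mul_nonneg hrx (sub_nonneg.2 hμ1)) hoN,
          mul_nonneg hrx (sub_nonneg.2 hr), mul_nonneg hrx hoN]
    _ ≤ 6 * K * r * a / (μ ^ 2 * o * N) := by
        rw [mul_right_comm 6 K r, mul_assoc (6 * r) K a]
        gcongr

theorem metastability_of_symmetry_breaking_states_general
    {n : Type*} [Fintype n] [DecidableEq n]
    (ρ : Matrix n n ℂ) (hρ : ρ.PosSemidef) (hρtr : ρ.trace = 1)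
    (L LA : Module.End ℂ (Matrix n n ℂ))
    (A : Matrix n n ℂ)
    (μ o N K r : ℝ)
    (hμ0 : 0 < μ) (hμ1 : μ ≤ 1) (ho : 0 < o) (hN : 0 < N)
    (hr : r ≤ o * N)
    -- (i) `L 1 = 0`
    (hL1 : L 1 = 0)
    -- (ii) detailed balance of `L` with respect to `ρ`
    (hdb : ∀ X Y : Matrix n n ℂ, (ρ * L X * Y).trace = (ρ * X * L Y).trace)
    -- (iv) the difference `M = L − L_A` acts trivially beyond the support of `A`
    (hM : ∀ Y : Matrix n n ℂ, (L - LA) (Y * A) = (L - LA) Y * A)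
    (hM1 : (L - LA) 1 = 0)
    -- (v) norm bound on the local part `L_A`
    (hLA : ∀ X : Matrix n n ℂ, ‖LA X‖ ≤ K * ‖X‖)
    -- (vi) decomposition of the order parameter
    (S Q R : Matrix n n ℂ)
    (hS : S = Q + R)
    (hQn : ‖Q‖ ≤ o * N) (hRn : ‖R‖ ≤ r)
    -- (vii) `L_A` commutes with the far part `Q`
    (hQL : ∀ X : Matrix n n ℂ, LA (Q * X) = Q * LA X)
    (hLQ : ∀ X : Matrix n n ℂ, LA X * Q = Q * LA X)
    -- (viii) extensive fluctuations
    (hfluc : ((μ * o * N) ^ 2 : ℂ) ≤ (ρ * (S * S)).trace) :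
    ‖((ρ * tildeOplus S (Real.sqrt ((ρ * (S * S)).trace.re)) * L A *
        tildeOplus S (Real.sqrt ((ρ * (S * S)).trace.re))).trace)‖
      ≤ 6 * K * r * ‖A‖ / (μ ^ 2 * o * N) ∧
    ‖((ρ * tildeOminus S (Real.sqrt ((ρ * (S * S)).trace.re)) * L A *
        tildeOminus S (Real.sqrt ((ρ * (S * S)).trace.re))).trace)‖
      ≤ 6 * K * r * ‖A‖ / (μ ^ 2 * o * N) := by
  set s := √(ρ * (S * S)).trace.re
  have hdb : IsDetailedBalance ρ L := hdb
  have hs : μ * o * N ≤ s := le_sqrt_re_of_sq_le (by exact_mod_cast hfluc)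
  have hs0 : 0 < s := (by positivity : 0 < μ * o * N).trans_le hs
  have hLA_A : L A = LA A := apply_eq_of_sub_apply_mul hM hM1
  have hQQL (X : Matrix n n ℂ) : LA (Q * Q * X) = Q * Q * LA X := by
    rw [mul_assoc, hQL, hQL, mul_assoc]
  have hbound (v : ℂ) (hv : ‖v‖ = s⁻¹) :
      ‖(ρ * (((√2 : ℝ) : ℂ)⁻¹ • (1 + v • S)) * L A * (((√2 : ℝ) : ℂ)⁻¹ • (1 + v • S))).trace‖
        ≤ 6 * K * r * ‖A‖ / (μ ^ 2 * o * N) := by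
    rw [trace_mul_smul_mul_smul, norm_mul, norm_inv_sqrt_two_sq, hS]
    refine (mul_le_mul_of_nonneg_left (norm_trace_mul_one_add_smul_add_mul_le hρ hρtr
      (hdb.trace_mul_apply_eq_zero hL1 A) (hdb.trace_mul_mul_apply_eq_zero hL1 hM hM1 hQL)
      (hdb.trace_mul_mul_apply_eq_zero hL1 hM hM1 hQQL) (hLA_A ▸ hLQ A) v) (by norm_num)).trans ?_
    exact metastability_error_le hμ0 hμ1 ho hN (norm_nonneg v) (hv ▸ inv_anti₀ (by positivity) hs)
      (norm_nonneg Q) hQn (norm_nonneg R) hRn hr (norm_nonneg _) (hLA_A ▸ hLA A)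
  have hnorm_inv : ‖((s : ℂ))⁻¹‖ = s⁻¹ := by
    rw [norm_inv, Complex.norm_real, Real.norm_of_nonneg hs0.le]
  refine ⟨hbound _ hnorm_inv, ?_⟩
  rw [tildeOminus, sub_eq_add_neg, ← neg_smul]
  exact hbound _ (by rw [norm_neg, hnorm_inv])

/-- Finite-volume metastability of the symmetry-breaking states: for a local Liouvillian `L`
in detailed balance with a steady state `ρ` having extensive fluctuations of an extensive
order parameter `S = Q + R`, the symmetry-breaking states `Õ^± ρ Õ^±` are metastable:
`|tr(ρ Õ^± L(A) Õ^±)| ≤ 6 K r ‖A‖ / (μ² o N)`. -/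
theorem metastability_of_symmetry_breaking_states
    {n : Type*} [Fintype n] [DecidableEq n] [Nonempty n]
    (ρ : Matrix n n ℂ) (hρ : ρ.PosSemidef) (hρtr : ρ.trace = 1)
    (L LA : Module.End ℂ (Matrix n n ℂ))
    (A : Matrix n n ℂ)
    (μ o N K r : ℝ)
    (hμ0 : 0 < μ) (hμ1 : μ ≤ 1) (ho : 0 < o) (hN : 0 < N) (hK : 0 ≤ K)
    (hr0 : 0 ≤ r) (hr : r ≤ o * N)
    -- (i) `L 1 = 0`
    (hL1 : L 1 = 0)
    -- (ii) detailed balance of `L` with respect to `ρ`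
    (hdb : ∀ X Y : Matrix n n ℂ, (ρ * L X * Y).trace = (ρ * X * L Y).trace)
    -- (iii) `L` is star-preserving
    (hLstar : ∀ X : Matrix n n ℂ, L Xᴴ = (L X)ᴴ)
    -- (iv) the difference `M = L − L_A` acts trivially beyond the support of `A`
    (hM : ∀ Y : Matrix n n ℂ, (L - LA) (Y * A) = (L - LA) Y * A)
    (hM1 : (L - LA) 1 = 0)
    -- (v) norm bound on the local part `L_A`
    (hLA : ∀ X : Matrix n n ℂ, ‖LA X‖ ≤ K * ‖X‖)
    -- (vi) decomposition of the order parameter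
    (S Q R : Matrix n n ℂ)
    (hS : S = Q + R) (hSh : Sᴴ = S) (hQh : Qᴴ = Q) (hRh : Rᴴ = R)
    (hQR : Q * R = R * Q)
    (hQn : ‖Q‖ ≤ o * N) (hRn : ‖R‖ ≤ r)
    -- (vii) `L_A` commutes with the far part `Q`
    (hQL : ∀ X : Matrix n n ℂ, LA (Q * X) = Q * LA X)
    (hLQ : ∀ X : Matrix n n ℂ, LA X * Q = Q * LA X)
    -- (viii) extensive fluctuations
    (hfluc : ((μ * o * N) ^ 2 : ℂ) ≤ (ρ * (S * S)).trace) :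
    ‖((ρ * tildeOplus S (Real.sqrt ((ρ * (S * S)).trace.re)) * L A *
        tildeOplus S (Real.sqrt ((ρ * (S * S)).trace.re))).trace)‖
      ≤ 6 * K * r * ‖A‖ / (μ ^ 2 * o * N) ∧
    ‖((ρ * tildeOminus S (Real.sqrt ((ρ * (S * S)).trace.re)) * L A *
        tildeOminus S (Real.sqrt ((ρ * (S * S)).trace.re))).trace)‖
      ≤ 6 * K * r * ‖A‖ / (μ ^ 2 * o * N) :=
  metastability_of_symmetry_breaking_states_general ρ hρ hρtr L LA A μ o N K r hμ0 hμ1 ho hN hr hL1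
    hdb hM hM1 hLA S Q R hS hQn hRn hQL hLQ hfluc
end

section
/- (Commutators of local observables with powers of the order parameter are subleading.) Let ρ be a density matrix, O⁺ = Q + R and A matrices with Q·R = R·Q and Q·A = A·Q, and reals o > 0, a ≥ 1, x > 0 with ‖R‖ ≤ o·a. Let m, m' be natural numbers and set a_j := tr(Q^j · ρ · (Q†)^j). Assume a_m > 0, a_{m'} > 0 and the decay bounds a_{m−k} ≤ x^{−2k}·a_m for all k ≤ m and a_{m'−k} ≤ x^{−2k}·a_{m'} for all k ≤ m', where x > 0. Then, with O⁻ := (O⁺)†: |tr(ρ · (O⁻)^{m'} · [A, (O⁺)^m])| ≤ 2·‖A‖ · (1 + o·a/x)^{m'} · ((1 + o·a/x)^m − 1) · √(a_m · a_{m'}), where [A,B] := A·B − B·A. -/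
/-!
Write `‖X‖_ρ := √(re tr(X ρ X†))`, the seminorm of the inner product `⟨X, Y⟩ = tr(Y ρ X†)`, so
that `a_j = ‖Q^j‖_ρ²`. The trace to be bounded is `⟨(O⁺)^{m'}, [A, (O⁺)^m]⟩`, hence by
Cauchy–Schwarz it is at most `‖(O⁺)^{m'}‖_ρ ‖[A, (O⁺)^m]‖_ρ`. Since `Q` commutes with `R` and `A`,
the binomial theorem gives `(O⁺)^N = ∑ C(N,k) R^k Q^{N-k}` and
`[A, (O⁺)^m] = ∑ C(m,k) [A, R^k] Q^{m-k}`, whose `k = 0` term vanishes. With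
`‖B X‖_ρ ≤ ‖B‖ ‖X‖_ρ`, `‖R^k‖ ≤ (oa)^k` and the decay bound `‖Q^{N-k}‖_ρ ≤ x^{-k} √a_N`, the
two sums are bounded by `(1 + oa/x)^{m'} √a_{m'}` and `2‖A‖ ((1 + oa/x)^m - 1) √a_m`.
-/

open Matrix
open scoped ComplexOrder Matrix.Norms.L2Operator

/-- `a_j = tr(Q^j · ρ · (Q†)^j)`, a nonnegative real number. -/
noncomputable def ktA {n : Type*} [Fintype n] [DecidableEq n]
    (ρ Q : Matrix n n ℂ) (j : ℕ) : ℝ :=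
  ((Q ^ j * ρ * Qᴴ ^ j).trace).re

open Finset
open scoped MatrixOrder

namespace Matrix
variable {n : Type*} [Fintype n]

/-- For `ρ ⪰ 0` this is, by `rfl`, the norm of `Matrix.toMatrixSeminormedAddCommGroup ρ`; the
lemmas below borrow its seminorm and inner-product facts through that instance. -/
noncomputable def stateNorm (ρ X : Matrix n n ℂ) : ℝ := √(X * ρ * Xᴴ).trace.re

variable {ρ : Matrix n n ℂ}

lemma norm_trace_mul_mul_conjTranspose_le (hρ : ρ.PosSemidef) (X Y : Matrix n n ℂ) :
    ‖(Y * ρ * Xᴴ).trace‖ ≤ stateNorm ρ X * stateNorm ρ Y :=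
  letI := ρ.toMatrixSeminormedAddCommGroup hρ
  letI := ρ.toMatrixInnerProductSpace hρ
  norm_inner_le_norm (𝕜 := ℂ) X Y

lemma stateNorm_sum_le (hρ : ρ.PosSemidef) {ι : Type*} (s : Finset ι) (X : ι → Matrix n n ℂ) :
    stateNorm ρ (∑ i ∈ s, X i) ≤ ∑ i ∈ s, stateNorm ρ (X i) :=
  letI := ρ.toMatrixSeminormedAddCommGroup hρ
  norm_sum_le s X

lemma stateNorm_smul (hρ : ρ.PosSemidef) (c : ℂ) (X : Matrix n n ℂ) :
    stateNorm ρ (c • X) = ‖c‖ * stateNorm ρ X :=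
  letI := ρ.toMatrixSeminormedAddCommGroup hρ
  letI := ρ.toMatrixInnerProductSpace hρ
  norm_smul c X

lemma re_trace_le_re_trace {P P' : Matrix n n ℂ} (h : P ≤ P') : P.trace.re ≤ P'.trace.re := by
  have := (Matrix.le_iff.mp h).trace_nonneg
  rw [trace_sub, sub_nonneg] at this
  exact (Complex.le_def.mp this).1

variable [DecidableEq n]

lemma stateNorm_mul_le (hρ : ρ.PosSemidef) (B X : Matrix n n ℂ) :
    stateNorm ρ (B * X) ≤ ‖B‖ * stateNorm ρ X := by
  -- With `ρ = D†D` and `Y = X D†`, conjugate the C*-bound `B†B ≤ ‖B‖²` by `Y` and take traces.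
  obtain ⟨D, rfl⟩ := CStarAlgebra.nonneg_iff_eq_star_mul_self.mp hρ.nonneg
  set Y := X * Dᴴ
  have hleft : ((B * X) * (star D * D) * (B * X)ᴴ).trace = (Yᴴ * (Bᴴ * B) * Y).trace := by
    rw [show (B * X) * (star D * D) * (B * X)ᴴ = (B * Y) * (B * Y)ᴴ by
      simp only [Y, star_eq_conjTranspose, conjTranspose_mul, conjTranspose_conjTranspose,
        Matrix.mul_assoc], trace_mul_comm]
    simp only [conjTranspose_mul, Matrix.mul_assoc]
  have hright : (Yᴴ * algebraMap ℝ (Matrix n n ℂ) (‖B‖ ^ 2) * Y).trace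
      = (‖B‖ ^ 2 : ℝ) • (X * (star D * D) * Xᴴ).trace := by
    rw [Algebra.algebraMap_eq_smul_one, Matrix.mul_smul, Matrix.mul_one, Matrix.smul_mul,
      trace_smul, trace_mul_comm]
    simp only [Y, star_eq_conjTranspose, conjTranspose_mul, conjTranspose_conjTranspose,
      Matrix.mul_assoc]
  have hsq : ((B * X) * (star D * D) * (B * X)ᴴ).trace.re
      ≤ ‖B‖ ^ 2 * (X * (star D * D) * Xᴴ).trace.re := by
    have := re_trace_le_re_trace <|
      star_left_conjugate_le_conjugate (CStarAlgebra.star_mul_le_algebraMap_norm_sq (a := B)) Y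
    rwa [star_eq_conjTranspose, star_eq_conjTranspose, ← hleft, hright, Complex.real_smul,
      Complex.re_ofReal_mul] at this
  calc stateNorm (star D * D) (B * X) ≤ √(‖B‖ ^ 2 * (X * (star D * D) * Xᴴ).trace.re) :=
        Real.sqrt_le_sqrt hsq
    _ = ‖B‖ * stateNorm (star D * D) X := by
      rw [Real.sqrt_mul (by positivity), Real.sqrt_sq (norm_nonneg B)]; rfl

lemma l2_opNorm_pow_le (B : Matrix n n ℂ) : ∀ k : ℕ, ‖B ^ k‖ ≤ ‖B‖ ^ k
  | 0 => by
    rw [pow_zero, pow_zero, cstar_norm_def, map_one]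
    exact ContinuousLinearMap.norm_id_le
  | k + 1 => norm_pow_le' B k.succ_pos

end Matrix

lemma Commute.add_pow_eq_sum_nsmul {α : Type*} [Semiring α] {x y : α} (h : Commute x y) (N : ℕ) :
    (x + y) ^ N = ∑ k ∈ range (N + 1), N.choose k • (x ^ k * y ^ (N - k)) := by
  rw [h.add_pow]
  simp only [nsmul_eq_mul']

lemma Commute.mul_add_pow_sub_add_pow_mul {α : Type*} [Ring α] {a x y : α} (hxy : Commute x y)
    (hay : Commute a y) (N : ℕ) :
    a * (x + y) ^ N - (x + y) ^ N * a
      = ∑ k ∈ range (N + 1), N.choose k • ((a * x ^ k - x ^ k * a) * y ^ (N - k)) := by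
  rw [hxy.add_pow_eq_sum_nsmul, mul_sum, sum_mul, ← sum_sub_distrib]
  refine sum_congr rfl fun k _ => ?_
  rw [mul_smul_comm, smul_mul_assoc, ← smul_sub, sub_mul, mul_assoc (x ^ k), mul_assoc (x ^ k),
    ← (hay.pow_right _).eq]
  simp only [mul_assoc]

/-- The term `- 0 ^ k` records that the commutator vanishes for `k = 0`; summed against binomial
weights it produces the `- 1` in `(1 + t) ^ N - 1`. -/
lemma norm_mul_pow_sub_pow_mul_le {α : Type*} [NormedRing α] (a r : α) :
    ∀ k : ℕ, ‖a * r ^ k - r ^ k * a‖ ≤ 2 * ‖a‖ * (‖r‖ ^ k - 0 ^ k)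
  | 0 => by simp
  | k + 1 => by
    calc ‖a * r ^ (k + 1) - r ^ (k + 1) * a‖ ≤ ‖a‖ * ‖r ^ (k + 1)‖ + ‖r ^ (k + 1)‖ * ‖a‖ :=
          (norm_sub_le _ _).trans (add_le_add (norm_mul_le _ _) (norm_mul_le _ _))
      _ = 2 * ‖a‖ * ‖r ^ (k + 1)‖ := by ring
      _ ≤ 2 * ‖a‖ * (‖r‖ ^ (k + 1) - 0 ^ (k + 1)) := by
          rw [zero_pow k.succ_ne_zero, sub_zero]
          gcongr
          exact norm_pow_le' r k.succ_pos

lemma sum_choose_mul_pow_mul_inv_pow (u x : ℝ) (N : ℕ) :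
    ∑ k ∈ range (N + 1), (N.choose k : ℝ) * (u ^ k * x⁻¹ ^ k) = (1 + u / x) ^ N := by
  rw [add_comm 1, add_pow]
  refine sum_congr rfl fun k _ => ?_
  rw [div_eq_mul_inv, mul_pow]
  ring

lemma sum_choose_mul_pow_sub_zero_pow_mul_inv_pow (c u x : ℝ) (N : ℕ) :
    ∑ k ∈ range (N + 1), (N.choose k : ℝ) * (c * (u ^ k - 0 ^ k) * x⁻¹ ^ k)
      = c * ((1 + u / x) ^ N - 1) := by
  have hterm : ∀ k, (N.choose k : ℝ) * (c * (u ^ k - 0 ^ k) * x⁻¹ ^ k)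
      = c * ((N.choose k : ℝ) * (u ^ k * x⁻¹ ^ k) - (N.choose k : ℝ) * (0 ^ k * x⁻¹ ^ k)) :=
    fun k => by ring
  simp_rw [hterm, ← mul_sum, sum_sub_distrib, sum_choose_mul_pow_mul_inv_pow, zero_div, add_zero,
    one_pow]

section Decay

variable {n : Type*} [Fintype n] [DecidableEq n] {ρ Q : Matrix n n ℂ}

lemma stateNorm_pow_eq_sqrt_ktA (j : ℕ) : stateNorm ρ (Q ^ j) = √(ktA ρ Q j) := by
  rw [stateNorm, ktA, conjTranspose_pow]

lemma ktA_nonneg (hρ : ρ.PosSemidef) (j : ℕ) : 0 ≤ ktA ρ Q j := by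
  rw [ktA, ← conjTranspose_pow]
  exact (Complex.le_def.mp (hρ.mul_mul_conjTranspose_same (Q ^ j)).trace_nonneg).1

variable {x : ℝ} {N : ℕ}

lemma stateNorm_pow_sub_le (hx : 0 < x)
    (hdecay : ∀ k ≤ N, ktA ρ Q (N - k) ≤ (x ^ (2 * k))⁻¹ * ktA ρ Q N) {k : ℕ} (hk : k ≤ N) :
    stateNorm ρ (Q ^ (N - k)) ≤ x⁻¹ ^ k * √(ktA ρ Q N) := by
  have hsq : (x ^ (2 * k))⁻¹ = (x⁻¹ ^ k) ^ 2 := by rw [← pow_mul, inv_pow, mul_comm]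
  calc stateNorm ρ (Q ^ (N - k)) ≤ √((x ^ (2 * k))⁻¹ * ktA ρ Q N) := by
        rw [stateNorm_pow_eq_sqrt_ktA]; exact Real.sqrt_le_sqrt (hdecay k hk)
    _ = x⁻¹ ^ k * √(ktA ρ Q N) := by
        rw [hsq, Real.sqrt_mul (sq_nonneg _), Real.sqrt_sq (by positivity)]

lemma stateNorm_sum_choose_le (hρ : ρ.PosSemidef) (hx : 0 < x)
    (hdecay : ∀ k ≤ N, ktA ρ Q (N - k) ≤ (x ^ (2 * k))⁻¹ * ktA ρ Q N)
    (B : ℕ → Matrix n n ℂ) (β : ℕ → ℝ) (hB : ∀ k ≤ N, ‖B k‖ ≤ β k) :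
    stateNorm ρ (∑ k ∈ range (N + 1), N.choose k • (B k * Q ^ (N - k)))
      ≤ (∑ k ∈ range (N + 1), (N.choose k : ℝ) * (β k * x⁻¹ ^ k)) * √(ktA ρ Q N) := by
  rw [sum_mul]
  refine (stateNorm_sum_le hρ _ _).trans (sum_le_sum fun k hk => ?_)
  have hk : k ≤ N := Nat.lt_succ_iff.mp (mem_range.mp hk)
  rw [← Nat.cast_smul_eq_nsmul ℂ, stateNorm_smul hρ, Complex.norm_natCast, mul_assoc, mul_assoc]
  refine mul_le_mul_of_nonneg_left ?_ (Nat.cast_nonneg _)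
  calc stateNorm ρ (B k * Q ^ (N - k)) ≤ ‖B k‖ * stateNorm ρ (Q ^ (N - k)) :=
        stateNorm_mul_le hρ _ _
    _ ≤ β k * (x⁻¹ ^ k * √(ktA ρ Q N)) :=
        mul_le_mul (hB k hk) (stateNorm_pow_sub_le hx hdecay hk) (Real.sqrt_nonneg _)
          ((norm_nonneg _).trans (hB k hk))

end Decay

theorem commutator_subleading_general
    {n : Type*} [Fintype n] [DecidableEq n]
    (ρ : Matrix n n ℂ) (hρ : ρ.PosSemidef)
    (Op Q R A : Matrix n n ℂ)
    (hOp : Op = Q + R) (hQR : Q * R = R * Q) (hQA : Q * A = A * Q)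
    (o a x : ℝ) (hx : 0 < x)
    (hRn : ‖R‖ ≤ o * a)
    (m m' : ℕ)
    (hdecay : ∀ k ≤ m, ktA ρ Q (m - k) ≤ (x ^ (2 * k))⁻¹ * ktA ρ Q m)
    (hdecay' : ∀ k ≤ m', ktA ρ Q (m' - k) ≤ (x ^ (2 * k))⁻¹ * ktA ρ Q m') :
    ‖(ρ * Opᴴ ^ m' * (A * Op ^ m - Op ^ m * A)).trace‖
      ≤ 2 * ‖A‖ * (1 + o * a / x) ^ m' * ((1 + o * a / x) ^ m - 1) *
          Real.sqrt (ktA ρ Q m * ktA ρ Q m') := by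
  have hRQ : Commute R Q := hQR.symm
  have ht : 0 ≤ o * a / x := div_nonneg ((norm_nonneg R).trans hRn) hx.le
  subst hOp
  rw [add_comm Q R]
  have hpow : stateNorm ρ ((R + Q) ^ m') ≤ (1 + o * a / x) ^ m' * √(ktA ρ Q m') := by
    rw [hRQ.add_pow_eq_sum_nsmul, ← sum_choose_mul_pow_mul_inv_pow]
    exact stateNorm_sum_choose_le hρ hx hdecay' _ _ fun k _ =>
      (l2_opNorm_pow_le R k).trans (pow_le_pow_left₀ (norm_nonneg R) hRn k)
  have hcomm : stateNorm ρ (A * (R + Q) ^ m - (R + Q) ^ m * A)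
      ≤ 2 * ‖A‖ * ((1 + o * a / x) ^ m - 1) * √(ktA ρ Q m) := by
    rw [hRQ.mul_add_pow_sub_add_pow_mul hQA.symm, ← sum_choose_mul_pow_sub_zero_pow_mul_inv_pow]
    exact stateNorm_sum_choose_le hρ hx hdecay _ _ fun k _ =>
      (norm_mul_pow_sub_pow_mul_le A R k).trans (mul_le_mul_of_nonneg_left
        (sub_le_sub_right (pow_le_pow_left₀ (norm_nonneg R) hRn k) _) (by positivity))
  calc _ = ‖((A * (R + Q) ^ m - (R + Q) ^ m * A) * ρ * ((R + Q) ^ m')ᴴ).trace‖ := by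
        rw [conjTranspose_pow, trace_mul_comm, ← Matrix.mul_assoc]
    _ ≤ stateNorm ρ ((R + Q) ^ m') * stateNorm ρ (A * (R + Q) ^ m - (R + Q) ^ m * A) :=
        norm_trace_mul_mul_conjTranspose_le hρ _ _
    _ ≤ (1 + o * a / x) ^ m' * √(ktA ρ Q m')
          * (2 * ‖A‖ * ((1 + o * a / x) ^ m - 1) * √(ktA ρ Q m)) :=
        mul_le_mul hpow hcomm (Real.sqrt_nonneg _)
          (mul_nonneg (pow_nonneg (by linarith) _) (Real.sqrt_nonneg _))
    _ = _ := by rw [Real.sqrt_mul (ktA_nonneg hρ m)]; ring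

/-- Commutators of local observables with powers of the order parameter are subleading:
`|tr(ρ (O⁻)^{m'} [A, (O⁺)^m])| ≤ 2‖A‖ (1 + oa/x)^{m'} ((1 + oa/x)^m − 1) √(a_m a_{m'})`. -/
theorem commutator_subleading
    {n : Type*} [Fintype n] [DecidableEq n] [Nonempty n]
    (ρ : Matrix n n ℂ) (hρ : ρ.PosSemidef) (hρtr : ρ.trace = 1)
    (Op Q R A : Matrix n n ℂ)
    (hOp : Op = Q + R) (hQR : Q * R = R * Q) (hQA : Q * A = A * Q)
    (o a x : ℝ) (ho : 0 < o) (ha : 1 ≤ a) (hx : 0 < x)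
    (hRn : ‖R‖ ≤ o * a)
    (m m' : ℕ)
    (ham : 0 < ktA ρ Q m) (ham' : 0 < ktA ρ Q m')
    (hdecay : ∀ k ≤ m, ktA ρ Q (m - k) ≤ (x ^ (2 * k))⁻¹ * ktA ρ Q m)
    (hdecay' : ∀ k ≤ m', ktA ρ Q (m' - k) ≤ (x ^ (2 * k))⁻¹ * ktA ρ Q m') :
    ‖(ρ * Opᴴ ^ m' * (A * Op ^ m - Op ^ m * A)).trace‖
      ≤ 2 * ‖A‖ * (1 + o * a / x) ^ m' * ((1 + o * a / x) ^ m - 1) *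
          Real.sqrt (ktA ρ Q m * ktA ρ Q m') :=
  commutator_subleading_general ρ hρ Op Q R A hOp hQR hQA o a x hx hRn m m' hdecay hdecay'
end
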